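/- arXiv:quant-ph/0205115 — 5 statements merged into one kernel-verified Lean document; each statement's English description precedes it below -/
import Mathlib

section
/- If α is not an integer multiple of π/4, and cos β = cos² α, then either α or β is an irrational multiple of π. -/
/-!
If `α = qπ` and `β = rπ`, then `cos 2α = 2 cos β - 1` is an algebraic integer, and it equals
`(ζ + ζ⁻¹) / 2` for the root of unity `ζ = exp (2iα)`. Unless `ζ = ±1`, every conjugate of this
number is `(ξ + ξ⁻¹) / 2 = Re ξ` for a primitive root of unity `ξ ≠ ±1`, so all conjugates lie
strictly inside the unit disc; a nonzero algebraic integer cannot do that, as its norm is a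
nonzero integer. Hence `cos 2α ∈ {-1, 0, 1}`, so `sin 4α = 0` and `α ∈ (π/4)ℤ`.
-/

open NumberField IntermediateField Real

theorem IsPrimitiveRoot.norm_add_inv_lt_two {ξ : ℂ} {b : ℕ} (hξ : IsPrimitiveRoot ξ b)
    (hb : 3 ≤ b) : ‖ξ + ξ⁻¹‖ < 2 := by
  have hnorm : ‖ξ‖ = 1 := hξ.norm'_eq_one (by omega)
  have him : ξ.im ≠ 0 := by
    intro him
    have hsq : ξ ^ 2 = 1 := by
      rw [sq, ← mul_inv_cancel₀ (norm_ne_zero_iff.mp (hnorm ▸ one_ne_zero)),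
        Complex.inv_eq_conj hnorm, Complex.conj_eq_iff_im.mpr him]
    have := Nat.le_of_dvd two_pos (hξ.dvd_of_pow_eq_one 2 hsq)
    omega
  rw [Complex.inv_eq_conj hnorm, Complex.add_conj, Complex.norm_real, norm_mul,
    Real.norm_two, Real.norm_eq_abs]
  linarith [Complex.abs_re_lt_norm.mpr him]

theorem IsPrimitiveRoot.add_inv_div_two_eq_zero_of_isIntegral {K : Type*} [Field K]
    [NumberField K] {ζ : K} {b : ℕ} (hζ : IsPrimitiveRoot ζ b) (hb : 3 ≤ b)
    (hint : IsIntegral ℤ ((ζ + ζ⁻¹) / 2)) : (ζ + ζ⁻¹) / 2 = 0 := by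
  by_contra hne
  obtain ⟨σ, hσ⟩ := exists_conjugate_one_le_norm (K := K) (α := ⟨_, hint⟩)
    fun h ↦ hne (congrArg ((↑) : 𝓞 K → K) h)
  have hlt := (hζ.map_of_injective σ.injective).norm_add_inv_lt_two hb
  change 1 ≤ ‖σ ((ζ + ζ⁻¹) / 2)‖ at hσ
  simp only [map_div₀, map_add, map_inv₀, map_ofNat, norm_div, Complex.norm_ofNat] at hσ
  linarith

theorem IsPrimitiveRoot.add_inv_div_two_eq_zero_of_isIntegral_complex {ζ : ℂ} {b : ℕ}
    (hζ : IsPrimitiveRoot ζ b) (hb : 3 ≤ b) (hint : IsIntegral ℤ ((ζ + ζ⁻¹) / 2)) :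
    (ζ + ζ⁻¹) / 2 = 0 := by
  have : FiniteDimensional ℚ ℚ⟮ζ⟯ := adjoin.finiteDimensional (hζ.isIntegral (by omega)).tower_top
  have : NumberField ℚ⟮ζ⟯ := ⟨⟩
  set ζ' : ℚ⟮ζ⟯ := ⟨ζ, mem_adjoin_simple_self ℚ ζ⟩
  have hcoe : ((ζ' + ζ'⁻¹) / 2 : ℚ⟮ζ⟯) = ((ζ + ζ⁻¹) / 2 : ℂ) := by push_cast; rfl
  have hζ' : IsPrimitiveRoot ζ' b :=
    hζ.of_map_of_injective (f := algebraMap ℚ⟮ζ⟯ ℂ) (algebraMap ℚ⟮ζ⟯ ℂ).injective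
  rw [← hcoe] at hint ⊢
  rw [hζ'.add_inv_div_two_eq_zero_of_isIntegral hb
    ((isIntegral_algebraMap_iff (algebraMap ℚ⟮ζ⟯ ℂ).injective).mp hint), ZeroMemClass.coe_zero]

theorem Real.cos_mem_of_isIntegral {θ : ℝ} (hθ : ∃ r : ℚ, θ = r * π)
    (hint : IsIntegral ℤ (cos θ)) : cos θ ∈ ({-1, 0, 1} : Set ℝ) := by
  obtain ⟨r, rfl⟩ := hθ
  obtain ⟨ζ, hζ⟩ : ∃ ζ, ζ = Complex.exp (r * π * Complex.I) := ⟨_, rfl⟩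
  have hcos : ((cos (r * π) : ℝ) : ℂ) = (ζ + ζ⁻¹) / 2 := by
    rw [hζ, Complex.ofReal_cos, Complex.cos, ← Complex.exp_neg]
    push_cast
    ring_nf
  have hord : 0 < orderOf ζ := orderOf_pos_iff.mpr <| isOfFinOrder_iff_pow_eq_one.mpr
    ⟨_, by positivity, hζ ▸ Complex.exp_rat_mul_pi_mul_I_pow_two_mul_den r⟩
  rcases le_or_gt 3 (orderOf ζ) with hb | hb
  · have hint' : IsIntegral ℤ ((ζ + ζ⁻¹) / 2) :=
      hcos ▸ (isIntegral_algebraMap_iff Complex.ofReal_injective).mpr hint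
    have h0 := (IsPrimitiveRoot.orderOf ζ).add_inv_div_two_eq_zero_of_isIntegral_complex hb hint'
    have : ((cos (r * π) : ℝ) : ℂ) = 0 := hcos.trans h0
    simp [Complex.ofReal_eq_zero.mp this]
  · have hsq : ζ ^ 2 = 1 :=
      orderOf_dvd_iff_pow_eq_one.mp <| by interval_cases orderOf ζ <;> norm_num
    rcases sq_eq_one_iff.mp hsq with h | h
    · have : ((cos (r * π) : ℝ) : ℂ) = 1 := by rw [hcos, h]; norm_num
      simp [Complex.ofReal_eq_one.mp this]
    · have : ((cos (r * π) : ℝ) : ℂ) = -1 := by rw [hcos, h]; norm_num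
      simp [show cos (r * π) = -1 by exact_mod_cast this]

/-- Włodarski's lemma: if `α` is not an integer multiple of `π/4` and
`cos β = cos² α`, then `α` or `β` is an irrational multiple of `π`. -/
theorem wlodarski (α β : ℝ)
    (hα : ¬ ∃ n : ℤ, α = n * (Real.pi / 4))
    (hβ : Real.cos β = (Real.cos α) ^ 2) :
    (¬ ∃ q : ℚ, α = q * Real.pi) ∨ (¬ ∃ q : ℚ, β = q * Real.pi) := by
  rw [← not_and_or]
  rintro ⟨⟨q, rfl⟩, r, rfl⟩
  have hint : IsIntegral ℤ (cos (2 * (q * π))) := by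
    rw [cos_two_mul, ← hβ]
    exact (isIntegral_two_mul_cos_rat_mul_pi r).sub isIntegral_one
  have hmem := cos_mem_of_isIntegral ⟨2 * q, by push_cast; ring⟩ hint
  have hsin : sin (2 * (2 * (q * π))) = 0 := by
    rw [sin_two_mul]
    rcases hmem with h | h | h
    · simp [sin_eq_zero_iff_cos_eq.mpr (Or.inr h)]
    · simp [h]
    · simp [sin_eq_zero_iff_cos_eq.mpr (Or.inl h)]
  obtain ⟨n, hn⟩ := sin_eq_zero_iff.mp hsin
  exact hα ⟨n, by linarith⟩
end

section
/- The number (π - arccos(3/4))/π is irrational; equivalently, arccos(3/4) is an irrational multiple of π. -/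
/-! If `θ` is a rational multiple of `π`, then `2 cos θ` is an algebraic integer, so a rational
value of `cos θ` lies in `{-1, -1/2, 0, 1/2, 1}` (Niven's theorem); `3/4` does not. -/

open Real

theorem not_exists_rat_mul_pi_of_cos_eq_ratCast {θ : ℝ} {c : ℚ} (hcos : cos θ = c)
    (hc : (c : ℝ) ∉ ({-1, -1 / 2, 0, 1 / 2, 1} : Set ℝ)) : ¬ ∃ q : ℚ, θ = q * π :=
  fun hθ => hc (hcos ▸ niven hθ ⟨c, hcos⟩)

theorem irrational_pi_sub_div_pi {θ : ℝ} (hθ : ¬ ∃ q : ℚ, θ = q * π) :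
    Irrational ((π - θ) / π) := by
  rintro ⟨r, hr⟩
  refine hθ ⟨1 - r, ?_⟩
  rw [eq_div_iff pi_ne_zero] at hr
  push_cast
  linarith

/-- `(π - arccos(3/4))/π` is irrational; equivalently `arccos(3/4)` is an
irrational multiple of `π`. -/
theorem arccos_three_quarters_irrational :
    Irrational ((Real.pi - Real.arccos (3 / 4)) / Real.pi) ∧
    ¬ ∃ q : ℚ, Real.arccos (3 / 4) = q * Real.pi := by
  have hcos : cos (arccos (3 / 4)) = ((3 / 4 : ℚ) : ℝ) := by
    rw [cos_arccos] <;> norm_num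
  have hθ := not_exists_rat_mul_pi_of_cos_eq_ratCast hcos (by norm_num)
  exact ⟨irrational_pi_sub_div_pi hθ, hθ⟩
end

section
/- Let S = U_θ be a rotation by angle θ, CNOT the 4×4 permutation matrix swapping |10⟩ and |11⟩, and U = ((S ⊗ S)·CNOT)². Then U ∈ SO(4) has eigenvalues 1, 1, exp(iα), exp(-iα), where α = 2·arccos(cos²θ). -/
open Polynomial Kronecker

/-!
`M = (U_θ ⊗ U_θ) · CNOT` is orthogonal with determinant `-1`, CNOT being the permutation
matrix of a transposition. The characteristic polynomial of an orthogonal matrix is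
(anti)palindromic according to the sign of its determinant, so in dimension four
`χ_M = X⁴ - t X³ + t X - 1` with `t = tr M = 2 cos² θ`. As `χ_{M²}(X²) = χ_M(X) χ_{-M}(X)`,
this gives `χ_{M²} = (X - 1)² (X² - (t² - 2) X + 1)`, and `t² - 2 = 2 cos α`.
-/

/-- The rotation matrix by angle `θ`. -/
noncomputable def Urot (θ : ℝ) : Matrix (Fin 2) (Fin 2) ℝ :=
  !![Real.cos θ, -Real.sin θ; Real.sin θ, Real.cos θ]

/-- The CNOT gate: `|b₁b₂⟩ ↦ |b₁, b₂ ⊕ b₁⟩`. -/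
def CNOT : Matrix (Fin 2 × Fin 2) (Fin 2 × Fin 2) ℝ :=
  Matrix.of fun i j => if i.1 = j.1 ∧ i.2 = j.1 + j.2 then 1 else 0

namespace Matrix

variable {m n R : Type*} [Fintype m] [DecidableEq m] [Fintype n] [DecidableEq n] [CommRing R]

theorem kronecker_mem_orthogonalGroup {A : Matrix m m R} {B : Matrix n n R}
    (hA : A ∈ orthogonalGroup m R) (hB : B ∈ orthogonalGroup n R) :
    A ⊗ₖ B ∈ orthogonalGroup (m × n) R := by
  rw [mem_orthogonalGroup_iff] at *
  rw [← kroneckerMap_transpose, ← mul_kronecker_mul, hA, hB, one_kronecker_one]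

theorem permMatrix_mem_orthogonalGroup (σ : Equiv.Perm n) :
    σ.permMatrix R ∈ orthogonalGroup n R := by
  rw [mem_orthogonalGroup_iff, transpose_permMatrix, ← permMatrix_mul, inv_mul_cancel,
    permMatrix_one]

theorem expand_charpoly_sq (A : Matrix n n R) :
    expand R 2 (A ^ 2).charpoly = A.charpoly * (-A).charpoly := by
  have hcomm : Commute (scalar n (X : R[X])) (C.mapMatrix A) :=
    scalar_commute X (fun _ => Commute.all _ _) _
  have hX : (expand R 2).mapMatrix (scalar n X) = scalar n X ^ 2 := by
    ext i j
    by_cases h : i = j <;> simp [h, sq]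
  have hC : (expand R 2).mapMatrix (C.mapMatrix A) = C.mapMatrix A := by
    ext i j
    simp
  rw [charpoly, charpoly, charpoly, AlgHom.map_det, charmatrix, map_sub, map_pow, map_pow, hX,
    hC, hcomm.sq_sub_sq, det_mul, mul_comm, charmatrix, charmatrix, map_neg, sub_neg_eq_add]

theorem charpolyRev_of_mem_orthogonalGroup {A : Matrix n n R} (hA : A ∈ orthogonalGroup n R) :
    A.charpolyRev = (-1) ^ Fintype.card n * C A.det * A.charpoly := by
  have hTA : Aᵀ * A = 1 := (mem_orthogonalGroup_iff' n R).1 hA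
  have hdet : A.det * A.det = 1 := by simpa using congr_arg det hTA
  have hunit : IsUnit A.det := IsUnit.of_mul_eq_one _ hdet
  have hinv : Ring.inverse A.det = A.det := by
    simpa using (Ring.inverse_mul_eq_iff_eq_mul _ 1 _ hunit).2 hdet.symm
  have h := charpoly_inv A ((isUnit_iff_isUnit_det A).2 hunit)
  rw [inv_eq_left_inv hTA, charpoly_transpose, hinv] at h
  have hC : C A.det * C A.det = 1 := by rw [← map_mul, hdet, map_one]
  calc A.charpolyRev = ((-1) ^ Fintype.card n * (-1) ^ Fintype.card n) * (C A.det * C A.det) *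
        A.charpolyRev := by rw [← mul_pow, neg_one_mul, neg_neg, one_pow, hC, one_mul, one_mul]
    _ = _ := by rw [h]; ring

section Dim4

variable [IsDomain R] [NeZero (2 : R)] {A : Matrix n n R}

theorem charpoly_of_mem_orthogonalGroup_of_det_eq_neg_one (hn : Fintype.card n = 4)
    (hA : A ∈ orthogonalGroup n R) (hdet : A.det = -1) :
    A.charpoly = X ^ 4 - C A.trace * X ^ 3 + C A.trace * X - 1 := by
  have hdeg : A.charpoly.natDegree = 4 := by rw [charpoly_natDegree_eq_dim, hn]
  have hrev : A.charpoly.reverse = -A.charpoly := by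
    rw [reverse_charpoly, charpolyRev_of_mem_orthogonalGroup hA, hn, hdet, map_neg, map_one]
    ring
  have hsymm (k : ℕ) (hk : k ≤ 4) : A.charpoly.coeff (4 - k) = -A.charpoly.coeff k := by
    simpa [coeff_reverse, hdeg, revAt_le hk] using congr_arg (coeff · k) hrev
  have h4 : A.charpoly.coeff 4 = 1 := by
    simpa [Monic, leadingCoeff, hdeg] using A.charpoly_monic
  have h3 : A.charpoly.coeff 3 = -A.trace := by
    have : Nonempty n := Fintype.card_pos_iff.1 (by omega)
    simp [trace_eq_neg_charpoly_coeff, hn]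
  have h0 : A.charpoly.coeff 0 = -1 := by
    linear_combination (by simpa [h4] using hsymm 0 (by norm_num) : (1 : R) = _)
  have h1 : A.charpoly.coeff 1 = A.trace := by
    linear_combination -(by simpa [h3] using hsymm 1 (by norm_num) : A.trace = _)
  have h2 : A.charpoly.coeff 2 = 0 := by
    have h : (2 : R) * A.charpoly.coeff 2 = 0 := by linear_combination hsymm 2 (by norm_num)
    exact (mul_eq_zero.1 h).resolve_left two_ne_zero
  rw [as_sum_range_C_mul_X_pow A.charpoly, hdeg]
  simp only [Finset.sum_range_succ, Finset.sum_range_zero, h0, h1, h2, h3, h4, map_neg, map_one,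
    map_zero]
  ring

theorem charpoly_sq_of_mem_orthogonalGroup_of_det_eq_neg_one (hn : Fintype.card n = 4)
    (hA : A ∈ orthogonalGroup n R) (hdet : A.det = -1) :
    (A ^ 2).charpoly = (X - 1) ^ 2 * (X ^ 2 - C (A.trace ^ 2 - 2) * X + 1) := by
  have hnegA : -A ∈ orthogonalGroup n R := by
    rw [mem_orthogonalGroup_iff] at hA ⊢
    rwa [transpose_neg, neg_mul_neg]
  have hnegdet : (-A).det = -1 := by rw [det_neg, hn, hdet]; norm_num
  apply expand_injective two_pos
  rw [expand_charpoly_sq, charpoly_of_mem_orthogonalGroup_of_det_eq_neg_one hn hA hdet,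
    charpoly_of_mem_orthogonalGroup_of_det_eq_neg_one hn hnegA hnegdet, trace_neg]
  simp only [map_mul, map_sub, map_add, map_pow, map_neg, map_one, map_ofNat, expand_X, expand_C]
  ring

end Dim4

end Matrix

theorem X_sub_C_exp_mul_X_sub_C_exp_neg (z : ℂ) :
    (X - C (Complex.exp (Complex.I * z))) * (X - C (Complex.exp (-(Complex.I * z)))) =
      X ^ 2 - C (2 * Complex.cos z) * X + 1 := by
  have hprod : Complex.exp (Complex.I * z) * Complex.exp (-(Complex.I * z)) = 1 := by
    rw [← Complex.exp_add, add_neg_cancel, Complex.exp_zero]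
  have hsum : Complex.exp (Complex.I * z) + Complex.exp (-(Complex.I * z)) =
      2 * Complex.cos z := by
    rw [Complex.two_cos, mul_comm, neg_mul, mul_comm]
  rw [← hsum, ← map_one C, ← hprod, map_add, map_mul]
  ring

theorem two_mul_cos_two_mul_arccos_cos_sq (θ : ℝ) :
    2 * Real.cos (2 * Real.arccos (Real.cos θ ^ 2)) = (2 * Real.cos θ ^ 2) ^ 2 - 2 := by
  have h : -1 ≤ Real.cos θ ^ 2 := by nlinarith [sq_nonneg (Real.cos θ)]
  rw [Real.cos_two_mul, Real.cos_arccos h (Real.cos_sq_le_one θ)]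
  ring

open Matrix

theorem Urot_mem_specialOrthogonalGroup (θ : ℝ) :
    Urot θ ∈ specialOrthogonalGroup (Fin 2) ℝ := by
  simp [Urot, Real.cos_sq_add_sin_sq]

theorem CNOT_eq_permMatrix : CNOT = (Equiv.swap (1, 0) (1, 1)).permMatrix ℝ := by
  ext ⟨i₁, i₂⟩ ⟨j₁, j₂⟩
  fin_cases i₁ <;> fin_cases i₂ <;> fin_cases j₁ <;> fin_cases j₂ <;>
    simp [CNOT, Equiv.Perm.permMatrix, PEquiv.toMatrix, Equiv.swap_apply_def]

theorem det_CNOT : CNOT.det = -1 := by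
  rw [CNOT_eq_permMatrix, det_permutation, Equiv.Perm.sign_swap (by simp)]
  simp

theorem kronecker_Urot_mul_CNOT_mem_orthogonalGroup (θ : ℝ) :
    (Urot θ ⊗ₖ Urot θ) * CNOT ∈ orthogonalGroup (Fin 2 × Fin 2) ℝ := by
  have hU := (mem_specialOrthogonalGroup_iff.1 (Urot_mem_specialOrthogonalGroup θ)).1
  exact mul_mem (kronecker_mem_orthogonalGroup hU hU)
    (CNOT_eq_permMatrix ▸ permMatrix_mem_orthogonalGroup _)

theorem det_kronecker_Urot_mul_CNOT (θ : ℝ) : ((Urot θ ⊗ₖ Urot θ) * CNOT).det = -1 := by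
  have hU := (mem_specialOrthogonalGroup_iff.1 (Urot_mem_specialOrthogonalGroup θ)).2
  simp [det_mul, det_kronecker, hU, det_CNOT]

theorem trace_kronecker_Urot_mul_CNOT (θ : ℝ) :
    ((Urot θ ⊗ₖ Urot θ) * CNOT).trace = 2 * Real.cos θ ^ 2 := by
  simp [trace, mul_apply, CNOT, Urot, Fintype.sum_prod_type, Fin.sum_univ_two, sq, two_mul]

/-- `U = ((U_θ ⊗ U_θ)·CNOT)²` lies in `SO(4)` and has eigenvalues
`1, 1, exp(iα), exp(-iα)` (with multiplicity), where `α = 2·arccos(cos²θ)`. -/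
theorem eigenvalues_of_cnot_conjugate (θ : ℝ) :
    let U : Matrix (Fin 2 × Fin 2) (Fin 2 × Fin 2) ℝ :=
      ((Urot θ ⊗ₖ Urot θ) * CNOT) ^ 2
    let α : ℝ := 2 * Real.arccos ((Real.cos θ) ^ 2)
    U * U.transpose = 1 ∧ U.det = 1 ∧
    (U.map (Complex.ofReal)).charpoly =
      (X - C 1) ^ 2 * (X - C (Complex.exp (Complex.I * (α : ℂ)))) *
        (X - C (Complex.exp (-(Complex.I * (α : ℂ))))) := by
  intro U α
  have hM := kronecker_Urot_mul_CNOT_mem_orthogonalGroup θ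
  have hdetM := det_kronecker_Urot_mul_CNOT θ
  refine ⟨(mem_orthogonalGroup_iff _ _).1 (pow_mem hM 2), by rw [det_pow, hdetM]; norm_num, ?_⟩
  have hU : U.charpoly = (X - 1) ^ 2 * (X ^ 2 - C (2 * Real.cos α) * X + 1) := by
    rw [charpoly_sq_of_mem_orthogonalGroup_of_det_eq_neg_one rfl hM hdetM,
      trace_kronecker_Urot_mul_CNOT, two_mul_cos_two_mul_arccos_cos_sq]
  rw [mul_assoc, X_sub_C_exp_mul_X_sub_C_exp_neg, map_one, ← Complex.ofReal_cos,
    show U.map Complex.ofReal = U.map Complex.ofRealHom from rfl, charpoly_map, hU]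
  simp
end

section
/- With U = ((U_θ ⊗ U_θ)·CNOT)² as above, the vector (1/2)(|00⟩ - |01⟩ + |10⟩ + |11⟩) is an eigenvector of U with eigenvalue 1. -/
open Kronecker

/-- `(1/2)(|00⟩ - |01⟩ + |10⟩ + |11⟩)` is a fixed vector of
`U = ((U_θ ⊗ U_θ)·CNOT)²`. -/
theorem fixed_vector_of_cnot_conjugate (θ : ℝ) :
    let U : Matrix (Fin 2 × Fin 2) (Fin 2 × Fin 2) ℝ :=
      ((Urot θ ⊗ₖ Urot θ) * CNOT) ^ 2
    let ξ : Fin 2 × Fin 2 → ℝ := fun p =>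
      if p = ((0 : Fin 2), (1 : Fin 2)) then -(1 / 2) else 1 / 2
    U.mulVec ξ = ξ := by
  intro U ξ
  have hsc := Real.sin_sq_add_cos_sq θ
  funext p
  obtain ⟨i, j⟩ := p
  fin_cases i <;> fin_cases j <;>
    simp [U, ξ, Matrix.mulVec, dotProduct, pow_two, Matrix.mul_apply,
      Fintype.sum_prod_type, Fin.sum_univ_two, Urot, CNOT, Matrix.kroneckerMap_apply] <;>
    norm_num [Prod.ext_iff] <;> nlinarith [hsc]
end

section
/- Let M be a real inner product space of dimension ≥ 3, ξ ∈ M a unit vector, H ⊆ SO(M) the stabilizer of the line ℝξ, and V ∈ O(M) an orthogonal map with Vξ ∉ ℝξ. Then the closure of the subgroup generated by H ∪ V⁻¹HV is all of SO(M). -/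
/-!
Put `ζ = V⁻¹ ξ`. In dimension `≥ 3` the rotations fixing `ξ` act transitively on every latitude
`{x | ‖x‖ = 1, ⟪ξ, x⟫ = t}` (a product of two reflections does it), and likewise for `ζ`.
Since `ζ ≠ ±ξ`, any two `ξ`-latitudes `t, t'` with `|t - t'| ≤ (1 - ⟪ξ, ζ⟫²) / 2` are met by a
common `ζ`-latitude, so the group `G` generated by both stabilizers moves points of latitude `t`
to points of latitude `t'`; finitely many such steps carry `ξ` to any unit vector. Every
`g ∈ SO(M)` then factors as `w * (w⁻¹ * g)` with `w ∈ G`, `w ξ = g ξ` and `w⁻¹ * g` fixing `ξ`,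
so `G` is all of `SO(M)`, not merely dense in it.
-/

open Module Submodule RealInnerProductSpace LinearIsometryEquiv

theorem abs_sub_le_two_sub_sq_sub_sq {t t' : ℝ} (ht : |t| ≤ 1) (ht' : |t'| ≤ 1)
    (htt' : |t - t'| ≤ 1) : |t - t'| ≤ 2 - t ^ 2 - t' ^ 2 := by
  obtain ⟨ht₁, ht₂⟩ := abs_le.1 ht
  obtain ⟨ht'₁, ht'₂⟩ := abs_le.1 ht'
  rcases abs_cases (t - t') with ⟨h, -⟩ | ⟨h, -⟩ <;> rw [h] at htt' ⊢
  · nlinarith [mul_nonneg (sub_nonneg.2 ht₂) (neg_le_iff_add_nonneg.1 ht'₁),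
      mul_nonneg (abs_nonneg (t - t')) (sub_nonneg.2 htt')]
  · nlinarith [mul_nonneg (sub_nonneg.2 ht'₂) (neg_le_iff_add_nonneg.1 ht₁),
      mul_nonneg (abs_nonneg (t - t')) (sub_nonneg.2 htt')]

/-- The two inequalities say that `v` lies in both intervals of values of `⟪ζ, ·⟫` on the
`ξ`-latitudes `t` and `t'` when `⟪ξ, ζ⟫ = c` (see `exists_norm_eq_one_inner_eq_inner_eq`). -/
theorem exists_sq_sub_mul_le_and_sq_sub_mul_le {c t t' : ℝ} (ht : |t| ≤ 1) (ht' : |t'| ≤ 1)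
    (htt' : |t - t'| ≤ (1 - c ^ 2) / 2) :
    ∃ v, (v - t * c) ^ 2 ≤ (1 - t ^ 2) * (1 - c ^ 2) ∧
      (v - t' * c) ^ 2 ≤ (1 - t' ^ 2) * (1 - c ^ 2) := by
  have hc : c ^ 2 ≤ 1 := by linarith [abs_nonneg (t - t')]
  have ht2 : t ^ 2 ≤ 1 := by rwa [sq_le_one_iff_abs_le_one]
  have ht'2 : t' ^ 2 ≤ 1 := by rwa [sq_le_one_iff_abs_le_one]
  have hA : 0 ≤ (1 - t ^ 2) * (1 - c ^ 2) := by nlinarith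
  have hB : 0 ≤ (1 - t' ^ 2) * (1 - c ^ 2) := by nlinarith
  set r := √((1 - t ^ 2) * (1 - c ^ 2))
  set r' := √((1 - t' ^ 2) * (1 - c ^ 2))
  have hdist : dist (t * c) (t' * c) ≤ r' + r := by
    have hd := abs_sub_le_two_sub_sq_sub_sq ht ht' (by nlinarith [sq_nonneg c])
    have hsq : (t * c - t' * c) ^ 2 ≤
        (1 - t ^ 2) * (1 - c ^ 2) + (1 - t' ^ 2) * (1 - c ^ 2) := by
      rw [← sub_mul, mul_pow, ← sq_abs (t - t')]
      nlinarith [abs_nonneg (t - t'), sq_nonneg c]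
    rw [Real.dist_eq]
    refine abs_le_of_sq_le_sq ?_ (by positivity)
    nlinarith [Real.sq_sqrt hA, Real.sq_sqrt hB, mul_nonneg (Real.sqrt_nonneg
      ((1 - t ^ 2) * (1 - c ^ 2))) (Real.sqrt_nonneg ((1 - t' ^ 2) * (1 - c ^ 2)))]
  obtain ⟨v, hv, hv'⟩ := exists_dist_le_le (Real.sqrt_nonneg _) (Real.sqrt_nonneg _) hdist
  rw [Real.dist_eq, abs_sub_comm, Real.le_sqrt (abs_nonneg _) hA, sq_abs] at hv
  rw [Real.dist_eq, Real.le_sqrt (abs_nonneg _) hB, sq_abs] at hv'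
  exact ⟨v, hv, hv'⟩

section

variable {M : Type*} [NormedAddCommGroup M] [InnerProductSpace ℝ M]

namespace LinearIsometryEquiv

variable (M) in
noncomputable def detHom : (M ≃ₗᵢ[ℝ] M) →* ℝˣ where
  toFun g := LinearEquiv.det g.toLinearEquiv
  map_one' := map_one LinearEquiv.det
  map_mul' g h := map_mul LinearEquiv.det g.toLinearEquiv h.toLinearEquiv

variable (M) in
noncomputable def specialOrthogonalGroup : Subgroup (M ≃ₗᵢ[ℝ] M) := (detHom M).ker

theorem mem_specialOrthogonalGroup_iff {g : M ≃ₗᵢ[ℝ] M} :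
    g ∈ specialOrthogonalGroup M ↔ LinearEquiv.det g.toLinearEquiv = 1 :=
  MonoidHom.mem_ker

theorem detHom_reflection_orthogonal_span_singleton [FiniteDimensional ℝ M] {u : M}
    (hu : u ≠ 0) : detHom M (reflection (ℝ ∙ u)ᗮ) = -1 := by
  change LinearEquiv.det _ = _
  rw [linearEquiv_det_reflection, orthogonal_orthogonal, finrank_span_singleton hu, pow_one]

end LinearIsometryEquiv

theorem real_inner_sq_lt_one_of_notMem_span_singleton {x y : M} (hx : ‖x‖ = 1)
    (hy : ‖y‖ = 1) (h : y ∉ ℝ ∙ x) : ⟪x, y⟫ ^ 2 < 1 := by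
  have h1 : |⟪x, y⟫| ≠ 1 := fun h1 => h <|
    Or.resolve_left (((norm_inner_eq_norm_tfae ℝ x y).out 0 3).1 (by simpa [hx, hy] using h1))
      (norm_ne_zero_iff.1 (by simp [hx]))
  rw [sq_lt_one_iff_abs_lt_one]
  exact lt_of_le_of_ne (abs_le.2 (real_inner_mem_Icc_of_norm_eq_one hx hy)) h1

variable [FiniteDimensional ℝ M]

theorem exists_norm_eq_one_inner_eq_zero (hdim : 3 ≤ finrank ℝ M) (x y : M) :
    ∃ e : M, ‖e‖ = 1 ∧ ⟪x, e⟫ = 0 ∧ ⟪y, e⟫ = 0 := by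
  let f : M →ₗ[ℝ] ℝ × ℝ := (innerₛₗ ℝ x).prod (innerₛₗ ℝ y)
  have hf : LinearMap.ker f ≠ ⊥ := LinearMap.ker_ne_bot_of_finrank_lt <| by
    rw [finrank_prod, finrank_self]
    omega
  obtain ⟨u, hu, hu0⟩ := exists_mem_ne_zero_of_ne_bot hf
  simp only [f, LinearMap.ker_prod, mem_inf, LinearMap.mem_ker, innerₛₗ_apply_apply] at hu
  refine ⟨‖u‖⁻¹ • u, norm_smul_inv_norm hu0, ?_, ?_⟩ <;>
    simp [real_inner_smul_right, hu.1, hu.2]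

theorem exists_norm_eq_one_inner_eq_inner_eq (hdim : 3 ≤ finrank ℝ M) {ξ ζ : M}
    (hξ : ‖ξ‖ = 1) (hζ : ‖ζ‖ = 1) (hξζ : ⟪ξ, ζ⟫ ^ 2 < 1) {t v : ℝ}
    (h : (v - t * ⟪ξ, ζ⟫) ^ 2 ≤ (1 - t ^ 2) * (1 - ⟪ξ, ζ⟫ ^ 2)) :
    ∃ x : M, ‖x‖ = 1 ∧ ⟪ξ, x⟫ = t ∧ ⟪ζ, x⟫ = v := by
  obtain ⟨e, he, hξe, hζe⟩ := exists_norm_eq_one_inner_eq_zero hdim ξ ζ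
  set c := ⟪ξ, ζ⟫
  have hs : 0 < 1 - c ^ 2 := by linarith
  set b := (v - t * c) / (1 - c ^ 2)
  have hbc : b * (1 - c ^ 2) = v - t * c := div_mul_cancel₀ _ hs.ne'
  have hbt : b ^ 2 * (1 - c ^ 2) ≤ 1 - t ^ 2 := by
    refine le_of_mul_le_mul_right ?_ hs
    linear_combination h + (b * (1 - c ^ 2) + (v - t * c)) * hbc
  set r := √(1 - t ^ 2 - b ^ 2 * (1 - c ^ 2))
  have hr : r ^ 2 = 1 - t ^ 2 - b ^ 2 * (1 - c ^ 2) := Real.sq_sqrt (by linarith)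
  have hζξ : ⟪ζ, ξ⟫ = c := real_inner_comm ξ ζ
  have heξ : ⟪e, ξ⟫ = 0 := by rw [real_inner_comm, hξe]
  have heζ : ⟪e, ζ⟫ = 0 := by rw [real_inner_comm, hζe]
  have hξξ : ⟪ξ, ξ⟫ = 1 := inner_self_eq_one_of_norm_eq_one hξ
  have hζζ : ⟪ζ, ζ⟫ = 1 := inner_self_eq_one_of_norm_eq_one hζ
  have hee : ⟪e, e⟫ = 1 := inner_self_eq_one_of_norm_eq_one he
  refine ⟨(t - b * c) • ξ + b • ζ + r • e, ?_, ?_, ?_⟩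
  · rw [← pow_eq_one_iff_of_nonneg (norm_nonneg _) two_ne_zero, ← real_inner_self_eq_norm_sq]
    simp only [inner_add_left, inner_add_right, real_inner_smul_left, real_inner_smul_right,
      hξξ, hζζ, hee, hζξ, hξe, hζe, heξ, heζ]
    linear_combination hr
  · simp only [inner_add_right, real_inner_smul_right, hξξ, hξe]
    ring
  · simp only [inner_add_right, real_inner_smul_right, hζξ, hζζ, hζe]
    linear_combination hbc

def IsTransitiveOnLatitudes (G : Subgroup (M ≃ₗᵢ[ℝ] M)) (ξ : M) : Prop :=
  ∀ ⦃x y : M⦄, ‖x‖ = ‖y‖ → ⟪ξ, x⟫ = ⟪ξ, y⟫ → ∃ g ∈ G, g x = y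

theorem isTransitiveOnLatitudes_of_stabilizer_le (hdim : 3 ≤ finrank ℝ M)
    {G : Subgroup (M ≃ₗᵢ[ℝ] M)} {ξ : M}
    (hG : ∀ g ∈ specialOrthogonalGroup M, g ξ = ξ → g ∈ G) : IsTransitiveOnLatitudes G ξ := by
  intro x y hxy hξ
  rcases eq_or_ne x y with rfl | hne
  · exact ⟨1, one_mem _, rfl⟩
  obtain ⟨u, hu, huξ, huy⟩ := exists_norm_eq_one_inner_eq_zero hdim ξ y
  have hξ_mem : ξ ∈ (ℝ ∙ (x - y))ᗮ := by
    rw [mem_orthogonal_singleton_iff_inner_right, inner_sub_left, real_inner_comm, hξ,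
      real_inner_comm, sub_self]
  -- the reflection in `(x - y)ᗮ` swaps `x` and `y`; the one in `uᗮ` fixes the determinant
  let g := reflection (ℝ ∙ u)ᗮ * reflection (ℝ ∙ (x - y))ᗮ
  have hg : g ∈ specialOrthogonalGroup M := by
    rw [specialOrthogonalGroup, MonoidHom.mem_ker, map_mul,
      detHom_reflection_orthogonal_span_singleton (norm_ne_zero_iff.1 (by simp [hu])),
      detHom_reflection_orthogonal_span_singleton (sub_ne_zero.2 hne), neg_one_mul, neg_neg]
  refine ⟨g, hG g hg ?_, ?_⟩
  · simp [g, reflection_mem_subspace_eq_self hξ_mem, reflection_mem_subspace_eq_self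
      (mem_orthogonal_singleton_iff_inner_left.2 huξ)]
  · simp [g, reflection_sub hxy, reflection_mem_subspace_eq_self
      (mem_orthogonal_singleton_iff_inner_left.2 huy)]

theorem IsTransitiveOnLatitudes.exists_apply_eq_of_abs_inner_sub_le (hdim : 3 ≤ finrank ℝ M)
    {G : Subgroup (M ≃ₗᵢ[ℝ] M)} {ξ ζ : M} (hξ : ‖ξ‖ = 1) (hζ : ‖ζ‖ = 1)
    (hξζ : ⟪ξ, ζ⟫ ^ 2 < 1) (hGξ : IsTransitiveOnLatitudes G ξ)
    (hGζ : IsTransitiveOnLatitudes G ζ) {x y : M} (hx : ‖x‖ = 1) (hy : ‖y‖ = 1)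
    (hxy : |⟪ξ, x⟫ - ⟪ξ, y⟫| ≤ (1 - ⟪ξ, ζ⟫ ^ 2) / 2) : ∃ g ∈ G, g x = y := by
  obtain ⟨v, hv, hv'⟩ := exists_sq_sub_mul_le_and_sq_sub_mul_le
    (abs_le.2 (real_inner_mem_Icc_of_norm_eq_one hξ hx))
    (abs_le.2 (real_inner_mem_Icc_of_norm_eq_one hξ hy)) hxy
  obtain ⟨x', hx', hξx', hζx'⟩ := exists_norm_eq_one_inner_eq_inner_eq hdim hξ hζ hξζ hv
  obtain ⟨y', hy', hξy', hζy'⟩ := exists_norm_eq_one_inner_eq_inner_eq hdim hξ hζ hξζ hv'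
  obtain ⟨g₁, hg₁, h₁⟩ := hGξ (hx.trans hx'.symm) hξx'.symm
  obtain ⟨g₂, hg₂, h₂⟩ := hGζ (hx'.trans hy'.symm) (hζx'.trans hζy'.symm)
  obtain ⟨g₃, hg₃, h₃⟩ := hGξ (hy'.trans hy.symm) hξy'
  exact ⟨g₃ * g₂ * g₁, mul_mem (mul_mem hg₃ hg₂) hg₁, by simp [h₁, h₂, h₃]⟩

theorem IsTransitiveOnLatitudes.exists_apply_eq (hdim : 3 ≤ finrank ℝ M)
    {G : Subgroup (M ≃ₗᵢ[ℝ] M)} {ξ ζ : M} (hξ : ‖ξ‖ = 1) (hζ : ‖ζ‖ = 1)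
    (hξζ : ⟪ξ, ζ⟫ ^ 2 < 1) (hGξ : IsTransitiveOnLatitudes G ξ)
    (hGζ : IsTransitiveOnLatitudes G ζ) {x : M} (hx : ‖x‖ = 1) : ∃ g ∈ G, g ξ = x := by
  set δ := (1 - ⟪ξ, ζ⟫ ^ 2) / 2
  have hδ : 0 < δ := half_pos (sub_pos.2 hξζ)
  suffices key : ∀ n : ℕ, ∀ x : M, ‖x‖ = 1 → 1 - ⟪ξ, x⟫ ≤ (n + 1) * δ → ∃ g ∈ G, g ξ = x by
    obtain ⟨n, hn⟩ := exists_nat_ge (2 / δ)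
    refine key n x hx ?_
    rw [div_le_iff₀ hδ] at hn
    nlinarith [neg_one_le_real_inner_of_norm_eq_one hξ hx]
  intro n
  induction n with
  | zero =>
    intro x hx hn
    refine hGξ.exists_apply_eq_of_abs_inner_sub_le hdim hξ hζ hξζ hGζ hξ hx (show _ ≤ δ from ?_)
    rw [inner_self_eq_one_of_norm_eq_one hξ,
      abs_of_nonneg (by linarith [real_inner_le_one_of_norm_eq_one hξ hx])]
    simpa using hn
  | succ n ih =>
    intro x hx hn
    by_cases hle : 1 - ⟪ξ, x⟫ ≤ (n + 1) * δ
    · exact ih x hx hle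
    have ht : |⟪ξ, x⟫ + δ| ≤ 1 := by
      refine abs_le.2 ⟨by linarith [neg_one_le_real_inner_of_norm_eq_one hξ hx], ?_⟩
      nlinarith [n.cast_nonneg (α := ℝ)]
    obtain ⟨y, hy, hξy, -⟩ := exists_norm_eq_one_inner_eq_inner_eq hdim hξ hζ hξζ
      (t := ⟪ξ, x⟫ + δ) (v := (⟪ξ, x⟫ + δ) * ⟪ξ, ζ⟫) <| by
        rw [sub_self, sq, zero_mul]
        exact mul_nonneg (sub_nonneg.2 ((sq_le_one_iff_abs_le_one _).2 ht)) (by linarith)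
    obtain ⟨g, hg, rfl⟩ := ih y hy (by rw [hξy]; push_cast at hn; linarith)
    obtain ⟨k, hk, hkx⟩ := hGξ.exists_apply_eq_of_abs_inner_sub_le hdim hξ hζ hξζ hGζ hy hx
      (by rw [hξy, add_sub_cancel_left, abs_of_pos hδ])
    exact ⟨k * g, mul_mem hk hg, hkx⟩

theorem specialOrthogonalGroup_le_of_stabilizers_le (hdim : 3 ≤ finrank ℝ M) {ξ ζ : M}
    (hξ : ‖ξ‖ = 1) (hζ : ‖ζ‖ = 1) (hξζ : ⟪ξ, ζ⟫ ^ 2 < 1) {G : Subgroup (M ≃ₗᵢ[ℝ] M)}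
    (hGξ : ∀ g ∈ specialOrthogonalGroup M, g ξ = ξ → g ∈ G)
    (hGζ : ∀ g ∈ specialOrthogonalGroup M, g ζ = ζ → g ∈ G) :
    specialOrthogonalGroup M ≤ G := by
  intro g hg
  obtain ⟨w, ⟨hwG, hwSO⟩, hw⟩ := IsTransitiveOnLatitudes.exists_apply_eq
    (G := G ⊓ specialOrthogonalGroup M) hdim hξ hζ hξζ
    (isTransitiveOnLatitudes_of_stabilizer_le hdim fun k hk hkξ => ⟨hGξ k hk hkξ, hk⟩)
    (isTransitiveOnLatitudes_of_stabilizer_le hdim fun k hk hkζ => ⟨hGζ k hk hkζ, hk⟩)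
    (x := g ξ) (by rw [g.norm_map, hξ])
  have hw' : w⁻¹ * g ∈ G := hGξ _ (mul_mem (inv_mem hwSO) hg) (by simp [← hw])
  simpa using mul_mem hwG hw'

end

/-- Kitaev's lemma: let `M` be a real inner product space of dimension `≥ 3`,
`ξ` a unit vector, `H ⊆ SO(M)` the stabilizer of the line `ℝξ`, and
`V ∈ O(M)` with `Vξ ∉ ℝξ`. Then the subgroup generated by `H ∪ V⁻¹HV` is
dense in `SO(M)` (in the norm topology on linear maps). -/
theorem kitaev_dense_subgroup
    {M : Type*} [NormedAddCommGroup M] [InnerProductSpace ℝ M]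
    [FiniteDimensional ℝ M] (hdim : 3 ≤ Module.finrank ℝ M)
    (ξ : M) (hξ : ‖ξ‖ = 1)
    (V : M ≃ₗᵢ[ℝ] M) (hV : V ξ ∉ (ℝ ∙ ξ : Submodule ℝ M)) :
    let H : Set (M ≃ₗᵢ[ℝ] M) :=
      {g | LinearEquiv.det g.toLinearEquiv = 1 ∧
        (ℝ ∙ ξ : Submodule ℝ M).map g.toLinearEquiv.toLinearMap = ℝ ∙ ξ}
    ∀ g : M ≃ₗᵢ[ℝ] M, LinearEquiv.det g.toLinearEquiv = 1 →
      (g.toLinearIsometry.toContinuousLinearMap : M →L[ℝ] M) ∈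
        closure ((fun h : M ≃ₗᵢ[ℝ] M =>
            (h.toLinearIsometry.toContinuousLinearMap : M →L[ℝ] M)) ''
          (Subgroup.closure (H ∪ (fun h => V⁻¹ * h * V) '' H) : Set (M ≃ₗᵢ[ℝ] M))) := by
  intro H g hg
  refine subset_closure ⟨g, ?_, rfl⟩
  have hH : ∀ h ∈ specialOrthogonalGroup M, h ξ = ξ → h ∈ H := fun h hh hhξ =>
    ⟨mem_specialOrthogonalGroup_iff.1 hh, by simp [map_span, hhξ]⟩
  have hVξ : ⟪ξ, V⁻¹ ξ⟫ ^ 2 < 1 := by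
    rw [← V.inner_map_map, coe_inv, apply_symm_apply, real_inner_comm]
    exact real_inner_sq_lt_one_of_notMem_span_singleton hξ (by rw [V.norm_map, hξ]) hV
  refine specialOrthogonalGroup_le_of_stabilizers_le hdim hξ
    (by rw [coe_inv, V.symm.norm_map, hξ]) hVξ
    (fun h hh hhξ => Subgroup.subset_closure (Or.inl (hH h hh hhξ))) (fun h hh hhζ => ?_)
    (mem_specialOrthogonalGroup_iff.2 hg)
  refine Subgroup.subset_closure (Or.inr ⟨V * h * V⁻¹, hH _ ?_ ?_, by group⟩)
  · exact (detHom M).normal_ker.conj_mem _ hh V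
  · simpa [coe_inv] using congrArg V hhζ
end
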